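/- arXiv:2004.09926 — 3 statements merged into one kernel-verified Lean document; each statement's English description precedes it below -/
import Mathlib

section
/- Let M be a monoid, μ : FreeMonoid Σ →* M, S ⊆ M, R := {w : List Σ | μ w ∈ S}, L ⊆ List (Σ ⊕ X), and let σ₁ ≤ σ₂ be word substitutions. Then the following are equivalent: (i) there exists a substitution σ with σ₁ ≤ σ ≤ σ₂ and σ(L) ⊆ R; (ii) σ₁(L) ⊆ R; (iii) the substitution σ* defined by σ* x := σ̂₁(x) ∩ σ₂ x (where σ̂₁ is the μ-saturation of σ₁) satisfies σ₁ ≤ σ* ≤ σ₂ and σ*(L) ⊆ R. -/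
/-- Extension of a word substitution to letters of the combined alphabet. -/
def substBar {α X : Type*} (σ : X → Set (List α)) : α ⊕ X → Set (List α)
  | Sum.inl a => {[a]}
  | Sum.inr x => σ x

/-- Extension of a word substitution to words over the combined alphabet. -/
def substWord {α X : Type*} (σ : X → Set (List α)) : List (α ⊕ X) → Set (List α)
  | [] => {[]}
  | c :: w => {u | ∃ u₁ ∈ substBar σ c, ∃ u₂ ∈ substWord σ w, u = u₁ ++ u₂}

/-- Extension of a word substitution to languages over the combined alphabet. -/
def substLang {α X : Type*} (σ : X → Set (List α)) (L : Set (List (α ⊕ X))) :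
    Set (List α) :=
  ⋃ w ∈ L, substWord σ w

/-- The `μ`-saturation of a word substitution. -/
def saturate {α X M : Type*} [Monoid M] (μ : FreeMonoid α →* M)
    (σ : X → Set (List α)) : X → Set (List α) :=
  fun x => {v : List α | ∃ u ∈ σ x, μ (FreeMonoid.ofList u) = μ (FreeMonoid.ofList v)}

lemma substWord_mono {α X : Type*} {σ τ : X → Set (List α)} (h : σ ≤ τ) :
    ∀ w, substWord σ w ⊆ substWord τ w := by
  intro w
  induction w with
  | nil => exact subset_rfl
  | cons c w ih =>
    rintro u ⟨u₁, h₁, u₂, h₂, rfl⟩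
    refine ⟨u₁, ?_, u₂, ih h₂, rfl⟩
    cases c with
    | inl a => exact h₁
    | inr x => exact h x h₁

lemma substLang_mono {α X : Type*} {σ τ : X → Set (List α)} (h : σ ≤ τ)
    (L : Set (List (α ⊕ X))) : substLang σ L ⊆ substLang τ L := by
  intro u hu
  simp only [substLang, Set.mem_iUnion] at hu ⊢
  obtain ⟨w, hw, hu⟩ := hu
  exact ⟨w, hw, substWord_mono h w hu⟩

lemma substWord_sat {α X M : Type*} [Monoid M] (μ : FreeMonoid α →* M)
    (σ₁ σ₂ : X → Set (List α)) :
    ∀ w, ∀ v ∈ substWord (fun x => saturate μ σ₁ x ∩ σ₂ x) w,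
      ∃ u ∈ substWord σ₁ w, μ (FreeMonoid.ofList u) = μ (FreeMonoid.ofList v) := by
  intro w
  induction w with
  | nil =>
    rintro v hv
    exact ⟨v, hv, rfl⟩
  | cons c w ih =>
    rintro v ⟨v₁, h₁, v₂, h₂, rfl⟩
    obtain ⟨u₂, hu₂, he₂⟩ := ih v₂ h₂
    cases c with
    | inl a =>
      exact ⟨[a] ++ u₂, ⟨[a], rfl, u₂, hu₂, rfl⟩, by
        cases h₁
        simp only [FreeMonoid.ofList_append, map_mul, he₂]⟩
    | inr x =>
      obtain ⟨u₁, hu₁, he₁⟩ := h₁.1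
      exact ⟨u₁ ++ u₂, ⟨u₁, hu₁, u₂, hu₂, rfl⟩, by
        simp only [FreeMonoid.ofList_append, map_mul, he₁, he₂]⟩

theorem solution_existence_characterization {α X M : Type*} [Monoid M]
    (μ : FreeMonoid α →* M) (S : Set M) (R : Set (List α))
    (hR : R = {w : List α | μ (FreeMonoid.ofList w) ∈ S})
    (L : Set (List (α ⊕ X))) (σ₁ σ₂ : X → Set (List α)) (h12 : σ₁ ≤ σ₂) :
    ((∃ σ : X → Set (List α), σ₁ ≤ σ ∧ σ ≤ σ₂ ∧ substLang σ L ⊆ R) ↔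
      substLang σ₁ L ⊆ R) ∧
    (substLang σ₁ L ⊆ R ↔
      (σ₁ ≤ (fun x => saturate μ σ₁ x ∩ σ₂ x) ∧
       (fun x => saturate μ σ₁ x ∩ σ₂ x) ≤ σ₂ ∧
       substLang (fun x => saturate μ σ₁ x ∩ σ₂ x) L ⊆ R)) := by
  have hle1 : σ₁ ≤ fun x => saturate μ σ₁ x ∩ σ₂ x := by
    intro x u hu
    exact ⟨⟨u, hu, rfl⟩, h12 x hu⟩
  have hle2 : (fun x => saturate μ σ₁ x ∩ σ₂ x) ≤ σ₂ := fun x => Set.inter_subset_right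
  constructor
  · constructor
    · rintro ⟨σ, hσ₁, _, hσR⟩
      exact (substLang_mono hσ₁ L).trans hσR
    · intro h
      exact ⟨σ₁, le_rfl, h12, h⟩
  · constructor
    · intro h
      refine ⟨hle1, hle2, ?_⟩
      intro v hv
      simp only [substLang, Set.mem_iUnion] at hv
      obtain ⟨w, hw, hv⟩ := hv
      obtain ⟨u, hu, he⟩ := substWord_sat μ σ₁ σ₂ w v hv
      have : u ∈ R := h (by simp only [substLang, Set.mem_iUnion]; exact ⟨w, hw, hu⟩)
      rw [hR] at this ⊢
      simpa [← he] using this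
    · rintro ⟨_, _, h⟩
      exact (substLang_mono hle1 L).trans h
end

section
/- Let M be a type, c : List Σ → M a function that strongly recognizes a set R ⊆ (ℕ → Σ) of ω-words. Let σ : X → Set (List Σ) be a word substitution all of whose values consist of nonempty words, let σ̂ be given by σ̂ x := {v : List Σ | v ≠ [] ∧ ∃ u ∈ σ x, c u = c v}, and let L ⊆ (ℕ → (Σ ⊕ X)) be a set of ω-words over the combined alphabet. If σ_ω(L) ⊆ R then σ̂_ω(L) ⊆ R; and if σ_ω(L) = R then σ̂_ω(L) = R. -/
/-- Partial sums of the lengths of the blocks `x 0, x 1, …`. -/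
def psum {α : Type*} (x : ℕ → List α) : ℕ → ℕ
  | 0 => 0
  | k + 1 => psum x k + (x k).length

/-- `u` is the ω-word obtained by concatenating the blocks `x 0, x 1, …`. -/
def IsConcat {α : Type*} (x : ℕ → List α) (u : ℕ → α) : Prop :=
  ∀ (k : ℕ) (j : Fin (x k).length), u (psum x k + j) = (x k).get j

/-- `c` strongly recognizes the ω-language `R`. -/
def StronglyRecognizes {α M : Type*} (c : List α → M) (R : Set (ℕ → α)) : Prop :=
  ∀ x y : ℕ → List α, (∀ i, x i ≠ []) → (∀ i, y i ≠ []) →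
    (∀ i, c (x i) = c (y i)) →
    ∀ u v : ℕ → α, IsConcat x u → IsConcat y v → (u ∈ R ↔ v ∈ R)

/-- The ω-extension of a word substitution, applied to an ω-word over `α ⊕ X`. -/
def substOmega {α X : Type*} (σ : X → Set (List α)) (w : ℕ → α ⊕ X) : Set (ℕ → α) :=
  {u | ∃ f : ℕ → List α, (∀ n, f n ∈ substBar σ (w n)) ∧ IsConcat f u}

/-- The ω-extension of a word substitution, applied to an ω-language over `α ⊕ X`. -/
def substOmegaLang {α X : Type*} (σ : X → Set (List α)) (L : Set (ℕ → α ⊕ X)) :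
    Set (ℕ → α) :=
  ⋃ w ∈ L, substOmega σ w

section Aux

variable {α : Type*}

lemma psum_lt_succ (f : ℕ → List α) (h : ∀ n, f n ≠ []) (k : ℕ) :
    psum f k < psum f (k + 1) := by
  have := List.length_pos_iff.mpr (h k)
  show psum f k < psum f k + (f k).length
  omega

lemma psum_strictMono (f : ℕ → List α) (h : ∀ n, f n ≠ []) :
    StrictMono (psum f) :=
  strictMono_nat_of_lt_succ (psum_lt_succ f h)

lemma le_psum (f : ℕ → List α) (h : ∀ n, f n ≠ []) (k : ℕ) : k ≤ psum f k := by
  induction k with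
  | zero => simp
  | succ n ih => have := psum_lt_succ f h n; omega

lemma exists_block (f : ℕ → List α) (h : ∀ n, f n ≠ []) (n : ℕ) :
    ∃ k, n < psum f (k + 1) :=
  ⟨n, lt_of_lt_of_le (Nat.lt_succ_self n)
    ((le_psum f h (n+1)))⟩

noncomputable def blockIdx (f : ℕ → List α) (h : ∀ n, f n ≠ []) (n : ℕ) : ℕ :=
  Nat.find (exists_block f h n)

lemma blockIdx_spec (f : ℕ → List α) (h : ∀ n, f n ≠ []) (n : ℕ) :
    psum f (blockIdx f h n) ≤ n ∧ n < psum f (blockIdx f h n + 1) := by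
  constructor
  · rcases Nat.eq_zero_or_pos (blockIdx f h n) with h0 | h0
    · rw [h0]; show psum f 0 ≤ n; simp [psum]
    · have h0' : blockIdx f h n - 1 < blockIdx f h n := by omega
      have := Nat.find_min (exists_block f h n)
        (show blockIdx f h n - 1 < Nat.find _ from h0')
      have heq : blockIdx f h n - 1 + 1 = blockIdx f h n := by omega
      rw [heq] at this
      omega
  · exact Nat.find_spec (exists_block f h n)

lemma blockIdx_eq (f : ℕ → List α) (h : ∀ n, f n ≠ []) (n k : ℕ)
    (h1 : psum f k ≤ n) (h2 : n < psum f (k + 1)) : blockIdx f h n = k := by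
  have hs := blockIdx_spec f h n
  by_contra hne
  rcases lt_or_gt_of_ne hne with hlt | hgt
  · have : psum f (blockIdx f h n + 1) ≤ psum f k :=
      (psum_strictMono f h).monotone (by omega)
    omega
  · have : psum f (k + 1) ≤ psum f (blockIdx f h n) :=
      (psum_strictMono f h).monotone (by omega)
    omega

noncomputable def concatOf (f : ℕ → List α) (h : ∀ n, f n ≠ []) (n : ℕ) : α :=
  (f (blockIdx f h n)).get ⟨n - psum f (blockIdx f h n), by
    have := blockIdx_spec f h n
    have : n < psum f (blockIdx f h n) + (f (blockIdx f h n)).length := this.2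
    omega⟩

lemma concatOf_eq (f : ℕ → List α) (h : ∀ n, f n ≠ []) (n k : ℕ)
    (hk : blockIdx f h n = k) (hlt : n - psum f k < (f k).length) :
    concatOf f h n = (f k).get ⟨n - psum f k, hlt⟩ := by
  subst hk; rfl

lemma isConcat_concatOf (f : ℕ → List α) (h : ∀ n, f n ≠ []) :
    IsConcat f (concatOf f h) := by
  intro k j
  have hj : (j : ℕ) < (f k).length := j.2
  have hb : blockIdx f h (psum f k + j) = k :=
    blockIdx_eq f h _ k (by omega) (by show _ < psum f k + (f k).length; omega)
  have hlt : psum f k + (j : ℕ) - psum f k < (f k).length := by omega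
  rw [concatOf_eq f h _ k hb hlt]
  congr 1
  exact Fin.ext (by simp)

end Aux

theorem omega_saturation_preserves_solutions {α X M : Type*}
    (c : List α → M) (R : Set (ℕ → α)) (hc : StronglyRecognizes c R)
    (σ : X → Set (List α)) (hσ : ∀ (x : X), ∀ w ∈ σ x, w ≠ [])
    (σh : X → Set (List α))
    (hσh : ∀ x : X, σh x = {v : List α | v ≠ [] ∧ ∃ u ∈ σ x, c u = c v})
    (L : Set (ℕ → α ⊕ X)) :
    (substOmegaLang σ L ⊆ R → substOmegaLang σh L ⊆ R) ∧
    (substOmegaLang σ L = R → substOmegaLang σh L = R) := by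
  have key : substOmegaLang σ L ⊆ R → substOmegaLang σh L ⊆ R := by
    intro hsub u hu
    rcases Set.mem_iUnion₂.mp hu with ⟨w, hwL, f, hf, hfu⟩
    -- for each n, pick g n ∈ substBar σ (w n) with same c-value as f n
    have hex : ∀ n, ∃ v, v ∈ substBar σ (w n) ∧ v ≠ [] ∧ c v = c (f n) := by
      intro n
      cases hwn : w n with
      | inl a =>
        have := hf n
        rw [hwn] at this
        simp only [substBar, Set.mem_singleton_iff] at this
        exact ⟨[a], by simp [substBar], by simp, by rw [this]⟩
      | inr x =>
        have := hf n
        rw [hwn] at this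
        simp only [substBar] at this
        rw [hσh x] at this
        rcases this with ⟨_, v, hv, hcv⟩
        exact ⟨v, by simpa [substBar] using hv, hσ x v hv, hcv⟩
    choose g hg1 hg2 hg3 using hex
    have hfne : ∀ n, f n ≠ [] := by
      intro n
      cases hwn : w n with
      | inl a =>
        have := hf n; rw [hwn] at this
        simp only [substBar, Set.mem_singleton_iff] at this
        simp [this]
      | inr x =>
        have := hf n; rw [hwn] at this
        simp only [substBar] at this
        rw [hσh x] at this
        exact this.1
    set v := concatOf g hg2 with hv
    have hvConc : IsConcat g (concatOf g hg2) := isConcat_concatOf g hg2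
    have hvR : v ∈ R := by
      apply hsub
      exact Set.mem_iUnion₂.mpr ⟨w, hwL, g, hg1, hvConc⟩
    exact (hc f g hfne hg2 (fun i => (hg3 i).symm) u v hfu hvConc).mpr hvR
  refine ⟨key, fun heq => ?_⟩
  apply le_antisymm (key heq.le)
  rw [← heq]
  apply Set.iUnion₂_mono
  intro w hw u ⟨f, hf, hfu⟩
  refine ⟨f, fun n => ?_, hfu⟩
  cases hwn : w n with
  | inl a =>
    have := hf n; rw [hwn] at this
    simpa [substBar] using this
  | inr x =>
    have := hf n; rw [hwn] at this
    simp only [substBar] at this ⊢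
    rw [hσh x]
    exact ⟨hσ x _ this, _, this, rfl⟩
end

section
/- Let L be a set of input trees (finite ranked trees over Σ ⊕ X) and R a set of pattern trees, and write σ_io(L) := ⋃_{s ∈ L} σ_io(s). If σ is a tree substitution with σ_io(L) ⊆ R, then there exists a tree substitution σ' with σ ≤ σ' and σ'_io(L) ⊆ R that is maximal: every tree substitution τ with σ' ≤ τ and τ_io(L) ⊆ R equals σ'. The same statement holds with σ_io(L) = R in place of σ_io(L) ⊆ R. -/
/-- Arity function for pattern trees: `Sum.inl a` has rank `rkA a`, holes have rank 0. -/
def patArity {A : Type*} (rkA : A → ℕ) (h : ℕ) : A ⊕ Fin h → Type :=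
  fun d => Fin (Sum.elim rkA (fun _ => 0) d)

/-- Arity function for input trees: `Sum.inl a` has rank `rkA a`, `Sum.inr x` has rank `rkX x`. -/
def inArity {A X : Type*} (rkA : A → ℕ) (rkX : X → ℕ) : A ⊕ X → Type :=
  fun d => Fin (Sum.elim rkA rkX d)

/-- `plug t g` replaces every leaf of `t` labeled by the hole `i` with `g i`. -/
def plug {A : Type*} {rkA : A → ℕ} {h : ℕ} :
    WType (patArity rkA h) → (Fin h → WType (patArity rkA h)) → WType (patArity rkA h)
  | WType.mk (Sum.inl a) c, g => WType.mk (Sum.inl a) (fun j => plug (c j) g)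
  | WType.mk (Sum.inr i) _, g => g i

/-- The set of holes occurring in a pattern tree. -/
def holes {A : Type*} {rkA : A → ℕ} {h : ℕ} : WType (patArity rkA h) → Set (Fin h)
  | WType.mk (Sum.inl _) c => ⋃ j, holes (c j)
  | WType.mk (Sum.inr i) _ => {i}

/-- `σ` is a tree substitution: each tree of `σ x` only uses holes `i` with `i < rkX x`. -/
def IsTreeSubst {A X : Type*} (rkA : A → ℕ) (rkX : X → ℕ) (h : ℕ)
    (σ : X → Set (WType (patArity rkA h))) : Prop :=
  ∀ x : X, ∀ t ∈ σ x, ∀ i ∈ holes t, (i : ℕ) < rkX x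

/-- The inside-out extension of a tree substitution to input trees. -/
def subIO {A X : Type*} (rkA : A → ℕ) (rkX : X → ℕ) (h : ℕ)
    (σ : X → Set (WType (patArity rkA h))) :
    WType (inArity rkA rkX) → Set (WType (patArity rkA h))
  | WType.mk (Sum.inl a) c =>
      {t | ∃ c' : Fin (rkA a) → WType (patArity rkA h),
        (∀ j : Fin (rkA a), c' j ∈ subIO rkA rkX h σ (c j)) ∧
        t = WType.mk (Sum.inl a) (fun j => c' j)}
  | WType.mk (Sum.inr x) c =>
      {t' | ∃ t ∈ σ x, ∃ g : Fin h → WType (patArity rkA h),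
        (∀ (i : Fin h) (hi : (i : ℕ) < rkX x), g i ∈ subIO rkA rkX h σ (c ⟨(i : ℕ), hi⟩)) ∧
        t' = plug t g}

/-- `plugRel S t t'` holds iff `t'` is obtained from `t` by replacing each leaf labeled by
hole `i`, independently of all other leaves, by some element of `S i`. -/
def plugRel {A : Type*} {rkA : A → ℕ} {h : ℕ} (S : Fin h → Set (WType (patArity rkA h))) :
    WType (patArity rkA h) → WType (patArity rkA h) → Prop
  | WType.mk (Sum.inl a) c, t' =>
      ∃ c' : Fin (rkA a) → WType (patArity rkA h),
        (∀ j : Fin (rkA a), plugRel S (c j) (c' j)) ∧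
        t' = WType.mk (Sum.inl a) (fun j => c' j)
  | WType.mk (Sum.inr i) _, t' => t' ∈ S i

/-- The outside-in extension of a tree substitution to input trees. -/
def subOI {A X : Type*} (rkA : A → ℕ) (rkX : X → ℕ) (h : ℕ)
    (σ : X → Set (WType (patArity rkA h))) :
    WType (inArity rkA rkX) → Set (WType (patArity rkA h))
  | WType.mk (Sum.inl a) c =>
      {t | ∃ c' : Fin (rkA a) → WType (patArity rkA h),
        (∀ j : Fin (rkA a), c' j ∈ subOI rkA rkX h σ (c j)) ∧
        t = WType.mk (Sum.inl a) (fun j => c' j)}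
  | WType.mk (Sum.inr x) c =>
      {t' | ∃ t ∈ σ x, plugRel
        (fun i : Fin h =>
          if hi : (i : ℕ) < rkX x then subOI rkA rkX h σ (c ⟨(i : ℕ), hi⟩) else ∅) t t'}


section Aux

variable {A X : Type*} {rkA : A → ℕ} {rkX : X → ℕ} {h : ℕ}

lemma subIO_mono {σ τ : X → Set (WType (patArity rkA h))} (hστ : σ ≤ τ) :
    ∀ s, subIO rkA rkX h σ s ⊆ subIO rkA rkX h τ s := by
  intro s
  induction s with
  | mk d ch ih =>
    cases d with
    | inl a =>
      intro t ht
      simp only [subIO, Set.mem_setOf_eq] at ht ⊢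
      obtain ⟨c', hc', rfl⟩ := ht
      exact ⟨c', fun j => ih j (hc' j), rfl⟩
    | inr x =>
      intro t' ht'
      simp only [subIO, Set.mem_setOf_eq] at ht' ⊢
      obtain ⟨t, htσ, g, hg, rfl⟩ := ht'
      exact ⟨t, hστ x htσ, g, fun i hi => ih ⟨(i : ℕ), hi⟩ (hg i hi), rfl⟩

lemma chain_fin_ub {α : Type*} [PartialOrder α] {c : Set α} (hc : IsChain (· ≤ ·) c)
    {σ₀ : α} (hσ₀ : σ₀ ∈ c) :
    ∀ n (f : Fin n → α), (∀ j, f j ∈ c) → ∃ ub ∈ c, σ₀ ≤ ub ∧ ∀ j, f j ≤ ub := by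
  intro n
  induction n with
  | zero => exact fun f _ => ⟨σ₀, hσ₀, le_rfl, fun j => j.elim0⟩
  | succ n ih =>
    intro f hf
    obtain ⟨ub, hubc, h0, hle⟩ := ih (f ∘ Fin.castSucc) (fun j => hf _)
    by_cases heq : ub = f (Fin.last n)
    · refine ⟨ub, hubc, h0, fun j => ?_⟩
      refine Fin.lastCases ?_ (fun k => hle k) j
      exact heq.ge
    rcases hc.total hubc (hf (Fin.last n)) with hle' | hle'
    · refine ⟨f (Fin.last n), hf _, h0.trans hle', fun j => ?_⟩
      exact Fin.lastCases le_rfl (fun k => (hle k).trans hle') j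
    · exact ⟨ub, hubc, h0, fun j => Fin.lastCases hle' (fun k => hle k) j⟩

lemma subIO_chain {c : Set (X → Set (WType (patArity rkA h)))} (hc : IsChain (· ≤ ·) c)
    {σ₀} (hσ₀ : σ₀ ∈ c) (s : WType (inArity rkA rkX)) (t : WType (patArity rkA h))
    (ht : t ∈ subIO rkA rkX h (fun x => ⋃ τ ∈ c, τ x) s) :
    ∃ τ ∈ c, t ∈ subIO rkA rkX h τ s := by
  induction s generalizing t with
  | mk d ch ih =>
    cases d with
    | inl a =>
      simp only [subIO, Set.mem_setOf_eq] at ht ⊢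
      obtain ⟨c', hc', rfl⟩ := ht
      choose τ hτc hτ using fun j => ih j _ (hc' j)
      obtain ⟨ub, hubc, -, hub⟩ := chain_fin_ub hc hσ₀ _ τ hτc
      exact ⟨ub, hubc, c', fun j => subIO_mono (hub j) _ (hτ j), rfl⟩
    | inr x =>
      simp only [subIO, Set.mem_setOf_eq, Set.mem_iUnion] at ht ⊢
      obtain ⟨tp, ⟨τt, hτtc, htp⟩, g, hg, rfl⟩ := ht
      have key : ∀ i : Fin h, ∃ τ, τ ∈ c ∧
          ∀ hi : (i : ℕ) < rkX x, g i ∈ subIO rkA rkX h τ (ch ⟨(i : ℕ), hi⟩) := by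
        intro i
        by_cases hi : (i : ℕ) < rkX x
        · obtain ⟨τ, hτ, hgt⟩ := ih ⟨(i : ℕ), hi⟩ _ (hg i hi)
          exact ⟨τ, hτ, fun _ => hgt⟩
        · exact ⟨σ₀, hσ₀, fun hi' => absurd hi' hi⟩
      choose f hfc hf using key
      obtain ⟨ub, hubc, h0, hub⟩ := chain_fin_ub hc hτtc h f hfc
      exact ⟨ub, hubc, tp, h0 x htp, g,
        fun i hi => subIO_mono (hub i) _ (hf i hi), rfl⟩

end Aux

theorem exists_maximal_io_solution {A X : Type*} (rkA : A → ℕ) (rkX : X → ℕ) (h : ℕ)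
    (hA : ∀ a, rkA a ≤ h) (hX : ∀ x, rkX x ≤ h)
    (L : Set (WType (inArity rkA rkX))) (R : Set (WType (patArity rkA h)))
    (σ : X → Set (WType (patArity rkA h))) (hσ : IsTreeSubst rkA rkX h σ) :
    ((⋃ s ∈ L, subIO rkA rkX h σ s) ⊆ R →
      ∃ σ' : X → Set (WType (patArity rkA h)), IsTreeSubst rkA rkX h σ' ∧ σ ≤ σ' ∧
        (⋃ s ∈ L, subIO rkA rkX h σ' s) ⊆ R ∧
        ∀ τ : X → Set (WType (patArity rkA h)), IsTreeSubst rkA rkX h τ → σ' ≤ τ →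
          (⋃ s ∈ L, subIO rkA rkX h τ s) ⊆ R → τ = σ') ∧
    ((⋃ s ∈ L, subIO rkA rkX h σ s) = R →
      ∃ σ' : X → Set (WType (patArity rkA h)), IsTreeSubst rkA rkX h σ' ∧ σ ≤ σ' ∧
        (⋃ s ∈ L, subIO rkA rkX h σ' s) = R ∧
        ∀ τ : X → Set (WType (patArity rkA h)), IsTreeSubst rkA rkX h τ → σ' ≤ τ →
          (⋃ s ∈ L, subIO rkA rkX h τ s) = R → τ = σ') := by
  
  have hub : ∀ (P : (X → Set (WType (patArity rkA h))) → Prop),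
      (∀ (cc : Set (X → Set (WType (patArity rkA h)))), (∀ τ ∈ cc, P τ) →
        IsChain (· ≤ ·) cc → ∀ y ∈ cc, P (fun x => ⋃ τ ∈ cc, τ x)) →
      P σ →
      ∃ m, σ ≤ m ∧ P m ∧ ∀ τ, P τ → m ≤ τ → τ = m := by
    intro P hP hPσ
    obtain ⟨m, hσm, hm⟩ := zorn_le_nonempty₀ {τ | P τ}
      (fun cc hcc hchain y hy =>
        ⟨fun x => ⋃ τ ∈ cc, τ x, hP cc (fun τ hτ => hcc hτ) hchain y hy,
          fun z hz x => Set.subset_biUnion_of_mem (u := fun τ => τ x) hz⟩) σ hPσ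
    exact ⟨m, hσm, hm.1, fun τ hτ hmτ => le_antisymm (hm.2 hτ hmτ) hmτ⟩
  have hsub : ∀ (cc : Set (X → Set (WType (patArity rkA h)))),
      IsChain (· ≤ ·) cc → ∀ y ∈ cc,
      IsTreeSubst rkA rkX h (fun x => ⋃ τ ∈ cc, τ x) ↔ (∀ τ ∈ cc, IsTreeSubst rkA rkX h τ) := by
    intro cc hchain y hy
    constructor
    · intro hsup τ hτ x t htx i hi
      exact hsup x t (Set.mem_biUnion hτ htx) i hi
    · intro hall x t htx i hi
      obtain ⟨τ, hτ, htx⟩ := Set.mem_iUnion₂.1 htx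
      exact hall τ hτ x t htx i hi
  constructor
  · intro hR
    have hchainP : ∀ (cc : Set (X → Set (WType (patArity rkA h)))),
        (∀ τ ∈ cc, IsTreeSubst rkA rkX h τ ∧ (⋃ s ∈ L, subIO rkA rkX h τ s) ⊆ R) →
        IsChain (· ≤ ·) cc → ∀ y ∈ cc,
        IsTreeSubst rkA rkX h (fun x => ⋃ τ ∈ cc, τ x) ∧
          (⋃ s ∈ L, subIO rkA rkX h (fun x => ⋃ τ ∈ cc, τ x) s) ⊆ R := by
      intro cc hcc hchain y hy
      refine ⟨(hsub cc hchain y hy).2 (fun τ hτ => (hcc τ hτ).1), ?_⟩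
      intro t ht
      obtain ⟨s, hs, hts⟩ := Set.mem_iUnion₂.1 ht
      obtain ⟨τ, hτc, htτ⟩ := subIO_chain hchain hy s t hts
      exact (hcc τ hτc).2 (Set.mem_biUnion hs htτ)
    obtain ⟨m, hσm, hm, hmax⟩ := hub
      (fun τ => IsTreeSubst rkA rkX h τ ∧ (⋃ s ∈ L, subIO rkA rkX h τ s) ⊆ R)
      hchainP ⟨hσ, hR⟩
    exact ⟨m, hm.1, hσm, hm.2, fun τ hτ hmτ hτR => hmax τ ⟨hτ, hτR⟩ hmτ⟩
  · intro hR
    have hchainP : ∀ (cc : Set (X → Set (WType (patArity rkA h)))),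
        (∀ τ ∈ cc, IsTreeSubst rkA rkX h τ ∧ (⋃ s ∈ L, subIO rkA rkX h τ s) = R) →
        IsChain (· ≤ ·) cc → ∀ y ∈ cc,
        IsTreeSubst rkA rkX h (fun x => ⋃ τ ∈ cc, τ x) ∧
          (⋃ s ∈ L, subIO rkA rkX h (fun x => ⋃ τ ∈ cc, τ x) s) = R := by
      intro cc hcc hchain y hy
      refine ⟨(hsub cc hchain y hy).2 (fun τ hτ => (hcc τ hτ).1), ?_⟩
      apply Set.Subset.antisymm
      · intro t ht
        obtain ⟨s, hs, hts⟩ := Set.mem_iUnion₂.1 ht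
        obtain ⟨τ, hτc, htτ⟩ := subIO_chain hchain hy s t hts
        exact (hcc τ hτc).2 ▸ Set.mem_biUnion hs htτ
      · rw [← (hcc y hy).2]
        refine Set.iUnion₂_mono fun s hs => subIO_mono (fun x => ?_) s
        exact Set.subset_biUnion_of_mem (u := fun τ => τ x) hy
    obtain ⟨m, hσm, hm, hmax⟩ := hub
      (fun τ => IsTreeSubst rkA rkX h τ ∧ (⋃ s ∈ L, subIO rkA rkX h τ s) = R)
      hchainP ⟨hσ, hR⟩
    exact ⟨m, hm.1, hσm, hm.2, fun τ hτ hmτ hτR => hmax τ ⟨hτ, hτR⟩ hmτ⟩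
end
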